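/- Value function bound on the terminal set: let N ≥ 1 and x̂ ∈ X_f. Define the closed-loop sequence x_0 := x̂, x_{i+1} := f^ε(x_i, μ(x_i)) and the input sequence u_μ := (μ(x_0), …, μ(x_{N−1})). Then x_i ∈ X_f for all i ∈ [0:N] (so u_μ is well defined), u_μ is ε-admissible for x̂, and V_N(x̂) ≤ J_N(x̂, u_μ) ≤ V_f(x̂). -/

import Mathlib

noncomputable section

abbrev E (n : ℕ) := EuclideanSpace ℝ (Fin n)

/-- Predicted trajectory of the surrogate model. -/
def traj {n m : ℕ} (fe : E n → E m → E n) (x0 : E n) (u : ℕ → E m) : ℕ → E n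
  | 0 => x0
  | k + 1 => fe (traj fe x0 u k) (u k)

/-- Pontryagin set difference `S ⊖ B_r`. -/
def pDiff {n : ℕ} (S : Set (E n)) (r : ℝ) : Set (E n) :=
  {x | ∀ z : E n, ‖z‖ ≤ r → x + z ∈ S}

/-- `c̄(k) = ∑_{i=0}^{k-1} L̄^i`. -/
def cbar (Lbar : ℝ) (k : ℕ) : ℝ := ∑ i ∈ Finset.range k, Lbar ^ i

/-- Quadratic form `xᵀQx` on Euclidean space. -/
def qf {n : ℕ} (Q : Matrix (Fin n) (Fin n) ℝ) (x : E n) : ℝ :=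
  dotProduct (WithLp.equiv 2 (Fin n → ℝ) x) (Q.mulVec (WithLp.equiv 2 (Fin n → ℝ) x))

/-- ε-admissibility of an input sequence `u` for initial state `xh`. -/
def Admissible {n m : ℕ} (fe : E n → E m → E n) (S Xf : Set (E n)) (U : Set (E m))
    (η Lbar : ℝ) (N : ℕ) (xh : E n) (u : ℕ → E m) : Prop :=
  (∀ k < N, u k ∈ U) ∧
  (∀ k, 1 ≤ k → k < N → traj fe xh u k ∈ pDiff S (cbar Lbar k * η)) ∧
  traj fe xh u N ∈ Xf

/-- MPC cost functional. -/
def JN {n m M : ℕ} (fe : E n → E m → E n) (Q : Matrix (Fin n) (Fin n) ℝ)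
    (R : Matrix (Fin m) (Fin m) ℝ) (P : Matrix (Fin M) (Fin M) ℝ) (Φ : E n → E M)
    (N : ℕ) (xh : E n) (u : ℕ → E m) : ℝ :=
  ∑ i ∈ Finset.range N, (qf Q (traj fe xh u i) + qf R (u i)) + qf P (Φ (traj fe xh u N))

/-- Optimal value function. -/
def VN {n m M : ℕ} (fe : E n → E m → E n) (S Xf : Set (E n)) (U : Set (E m))
    (η Lbar : ℝ) (Q : Matrix (Fin n) (Fin n) ℝ) (R : Matrix (Fin m) (Fin m) ℝ)
    (P : Matrix (Fin M) (Fin M) ℝ) (Φ : E n → E M) (N : ℕ) (xh : E n) : ℝ :=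
  sInf (JN fe Q R P Φ N xh '' {u | Admissible fe S Xf U η Lbar N xh u})

/-!
Since the stage cost is nonnegative, the decrease condition makes the sublevel set `X_f` of
`V_f` forward invariant under the terminal controller, so the closed loop stays in
`X_f ⊆ S ⊖ B_{c̄(N)η} ⊆ S ⊖ B_{c̄(k)η}` and `u_μ` is admissible. Summing the decrease
condition along the closed loop telescopes to `J_N(x̂, u_μ) ≤ V_f(x̂)`, and `V_N(x̂)`, an
infimum of nonnegative costs over a set containing `u_μ`, is at most `J_N(x̂, u_μ)`.
-/

lemma qf_nonneg {n : ℕ} {Q : Matrix (Fin n) (Fin n) ℝ} (hQ : Q.PosSemidef) (x : E n) :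
    0 ≤ qf Q x :=
  hQ.dotProduct_mulVec_nonneg _

lemma traj_eq_of_succ {n m : ℕ} {fe : E n → E m → E n} {x0 : E n} {u : ℕ → E m}
    {x : ℕ → E n} (h0 : x 0 = x0) (hsucc : ∀ k, x (k + 1) = fe (x k) (u k)) :
    traj fe x0 u = x := by
  funext k
  induction k with
  | zero => exact h0.symm
  | succ k ih => rw [traj, ih, hsucc]

lemma cbar_mono {Lbar : ℝ} (hL : 0 ≤ Lbar) : Monotone (cbar Lbar) := fun _ _ hkl =>
  Finset.sum_le_sum_of_subset_of_nonneg (Finset.range_subset_range.2 hkl)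
    fun i _ _ => pow_nonneg hL i

lemma pDiff_anti {n : ℕ} (S : Set (E n)) : Antitone (pDiff S) :=
  fun _ _ hrs _ hx z hz => hx z (hz.trans hrs)

lemma JN_nonneg {n m M : ℕ} (fe : E n → E m → E n) {Q : Matrix (Fin n) (Fin n) ℝ}
    {R : Matrix (Fin m) (Fin m) ℝ} {P : Matrix (Fin M) (Fin M) ℝ} (hQ : Q.PosSemidef)
    (hR : R.PosSemidef) (hP : P.PosSemidef) (Φ : E n → E M) (N : ℕ) (xh : E n)
    (u : ℕ → E m) : 0 ≤ JN fe Q R P Φ N xh u :=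
  add_nonneg (Finset.sum_nonneg fun _ _ => add_nonneg (qf_nonneg hQ _) (qf_nonneg hR _))
    (qf_nonneg hP _)

lemma VN_le_JN {n m M : ℕ} {fe : E n → E m → E n} {S Xf : Set (E n)} {U : Set (E m)}
    {η Lbar : ℝ} {Q : Matrix (Fin n) (Fin n) ℝ} {R : Matrix (Fin m) (Fin m) ℝ}
    {P : Matrix (Fin M) (Fin M) ℝ} (hQ : Q.PosSemidef) (hR : R.PosSemidef)
    (hP : P.PosSemidef) {Φ : E n → E M} {N : ℕ} {xh : E n} {u : ℕ → E m}
    (hu : Admissible fe S Xf U η Lbar N xh u) :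
    VN fe S Xf U η Lbar Q R P Φ N xh ≤ JN fe Q R P Φ N xh u := by
  refine csInf_le ⟨0, ?_⟩ ⟨u, hu, rfl⟩
  rintro _ ⟨v, -, rfl⟩
  exact JN_nonneg fe hQ hR hP Φ N xh v

lemma sum_add_le_of_decrease (V ℓ : ℕ → ℝ) (k : ℕ)
    (hdec : ∀ i < k, V (i + 1) - V i ≤ -ℓ i) :
    ∑ i ∈ Finset.range k, ℓ i + V k ≤ V 0 := by
  have hsum : ∑ i ∈ Finset.range k, ℓ i ≤ ∑ i ∈ Finset.range k, (V i - V (i + 1)) :=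
    Finset.sum_le_sum fun i hi => by linarith [hdec i (Finset.mem_range.1 hi)]
  rw [Finset.sum_range_sub'] at hsum
  linarith

lemma forall_mem_of_mapsTo {α : Type*} {X : Set α} {g : α → α} (hg : Set.MapsTo g X X)
    {x : ℕ → α} (h0 : x 0 ∈ X) (hsucc : ∀ i, x (i + 1) = g (x i)) : ∀ i, x i ∈ X
  | 0 => h0
  | i + 1 => hsucc i ▸ hg (forall_mem_of_mapsTo hg h0 hsucc i)

lemma mapsTo_sublevel_of_decrease {α : Type*} {V ℓ : α → ℝ} {g : α → α} {c : ℝ}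
    (hℓ : ∀ x, 0 ≤ ℓ x) (hdec : ∀ x ∈ {x | V x ≤ c}, V (g x) - V x ≤ -ℓ x) :
    Set.MapsTo g {x | V x ≤ c} {x | V x ≤ c} := fun x (hx : V x ≤ c) =>
  show V (g x) ≤ c by linarith [hdec x hx, hℓ x]

theorem value_function_bound_on_terminal_set_general
    {n m M : ℕ} (S : Set (E n)) (U : Set (E m))
    (fe : E n → E m → E n) (Lbar : ℝ) (hL : 1 ≤ Lbar)
    (η : ℝ) (hη : 0 ≤ η)
    (Q : Matrix (Fin n) (Fin n) ℝ) (R : Matrix (Fin m) (Fin m) ℝ)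
    (hQ : Q.PosDef) (hR : R.PosDef)
    (P : Matrix (Fin M) (Fin M) ℝ) (hP : P.PosDef)
    (Φ : E n → E M)
    (c : ℝ) (N : ℕ)
    (Xf : Set (E n)) (hXf : Xf = {x | qf P (Φ x) ≤ c})
    (hXfS : Xf ⊆ pDiff S (cbar Lbar N * η))
    (μ : E n → E m) (hμU : ∀ x ∈ Xf, μ x ∈ U)
    (hμdec : ∀ x ∈ Xf,
      qf P (Φ (fe x (μ x))) - qf P (Φ x) ≤ -(qf Q x + qf R (μ x)))
    (xh : E n) (hxh : xh ∈ Xf)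
    (xseq : ℕ → E n) (hx0 : xseq 0 = xh)
    (hxrec : ∀ i, xseq (i + 1) = fe (xseq i) (μ (xseq i))) :
    (∀ i ≤ N, xseq i ∈ Xf) ∧
    Admissible fe S Xf U η Lbar N xh (fun k => μ (xseq k)) ∧
    VN fe S Xf U η Lbar Q R P Φ N xh ≤ JN fe Q R P Φ N xh (fun k => μ (xseq k)) ∧
    JN fe Q R P Φ N xh (fun k => μ (xseq k)) ≤ qf P (Φ xh) := by
  have hinv : ∀ i, xseq i ∈ Xf := by
    subst hXf
    exact forall_mem_of_mapsTo
      (mapsTo_sublevel_of_decrease (fun x => add_nonneg (qf_nonneg hQ.posSemidef x)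
        (qf_nonneg hR.posSemidef (μ x))) hμdec) (hx0 ▸ hxh) hxrec
  have htraj : traj fe xh (fun k => μ (xseq k)) = xseq := traj_eq_of_succ hx0 hxrec
  have hadm : Admissible fe S Xf U η Lbar N xh (fun k => μ (xseq k)) := by
    refine ⟨fun k _ => hμU _ (hinv k), fun k _ hkN => ?_, by rw [htraj]; exact hinv N⟩
    rw [htraj]
    exact pDiff_anti S (mul_le_mul_of_nonneg_right (cbar_mono (by linarith) hkN.le) hη)
      (hXfS (hinv k))
  refine ⟨fun i _ => hinv i, hadm, VN_le_JN hQ.posSemidef hR.posSemidef hP.posSemidef hadm, ?_⟩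
  have hcost := sum_add_le_of_decrease (fun i => qf P (Φ (xseq i)))
    (fun i => qf Q (xseq i) + qf R (μ (xseq i))) N fun i _ => hxrec i ▸ hμdec _ (hinv i)
  simpa only [JN, htraj, hx0] using hcost

/-- Value function bound on the terminal set. -/
theorem value_function_bound_on_terminal_set
    {n m M : ℕ} (S : Set (E n)) (U : Set (E m))
    (hScomp : IsCompact S) (hSconv : Convex ℝ S) (hS0 : (0 : E n) ∈ interior S)
    (hUcomp : IsCompact U) (hUconv : Convex ℝ U) (hU0 : (0 : E m) ∈ interior U)
    (fe : E n → E m → E n) (Lbar : ℝ) (hL : 1 ≤ Lbar)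
    (hLip : ∀ u ∈ U, ∀ x ∈ S, ∀ y ∈ S, ‖fe x u - fe y u‖ ≤ Lbar * ‖x - y‖)
    (η : ℝ) (hη : 0 ≤ η)
    (Q : Matrix (Fin n) (Fin n) ℝ) (R : Matrix (Fin m) (Fin m) ℝ)
    (hQ : Q.PosDef) (hR : R.PosDef)
    (P : Matrix (Fin M) (Fin M) ℝ) (hP : P.PosDef)
    (Φ : E n → E M) (LΦ : ℝ) (hΦ : ∀ x y, ‖Φ x - Φ y‖ ≤ LΦ * ‖x - y‖) (hΦ0 : Φ 0 = 0)
    (c : ℝ) (hc : 0 < c) (N : ℕ) (hN : 1 ≤ N)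
    (Xf : Set (E n)) (hXf : Xf = {x | qf P (Φ x) ≤ c})
    (hXfS : Xf ⊆ pDiff S (cbar Lbar N * η))
    (μ : E n → E m) (hμ0 : μ 0 = 0) (hμU : ∀ x ∈ Xf, μ x ∈ U)
    (hμdec : ∀ x ∈ Xf,
      qf P (Φ (fe x (μ x))) - qf P (Φ x) ≤ -(qf Q x + qf R (μ x)))
    (xh : E n) (hxh : xh ∈ Xf)
    (xseq : ℕ → E n) (hx0 : xseq 0 = xh)
    (hxrec : ∀ i, xseq (i + 1) = fe (xseq i) (μ (xseq i))) :
    (∀ i ≤ N, xseq i ∈ Xf) ∧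
    Admissible fe S Xf U η Lbar N xh (fun k => μ (xseq k)) ∧
    VN fe S Xf U η Lbar Q R P Φ N xh ≤ JN fe Q R P Φ N xh (fun k => μ (xseq k)) ∧
    JN fe Q R P Φ N xh (fun k => μ (xseq k)) ≤ qf P (Φ xh) :=
  value_function_bound_on_terminal_set_general S U fe Lbar hL η hη Q R hQ hR P hP Φ c N Xf hXf hXfS
    μ hμU hμdec xh hxh xseq hx0 hxrec
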